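/- For α > 1 and β satisfying 0 < β ≤ α̃ = α/(2α-1), one has B(β) ≤ B(α), where B is extended by continuity with B(1) = eπ and B(1/2) = 2π. -/

import Mathlib

/-!
Writing `B(α) = π · exp (F α)`, the exponent `F` is invariant under the involution `α ↦ α̃`,
which swaps `(1/2, 1)` with `(1, ∞)`, and is antitone on `(1, ∞)` because
`log u ≥ 2(u-1)/(u+1)` for `u ≥ 1`. So for `1/2 < β ≤ α̃` we have `α ≤ β̃` and
`F β = F β̃ ≤ F α`. For `β ≤ 1/2`, `B(β) = 2π`, and `F α > log 2` is the concavity of `log`: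
the secant slope `log u / (u-1)` from `1` decreases in `u`, so at `u = 2α-1` it exceeds
`log (u+1) / u`.
-/

/-- The bound `B(α) = π · α^(1/(2(α-1))) · α̃^(1/(2(α̃-1)))` with `α̃ = α/(2α-1)`,
extended by continuity by `B(1) = eπ` and `B(α) = 2π` for `α ≤ 1/2`. -/
noncomputable def Bext (α : ℝ) : ℝ :=
  if α ≤ 1/2 then 2 * Real.pi
  else if α = 1 then Real.exp 1 * Real.pi
  else Real.pi * α ^ (1/(2*(α-1))) * (α / (2*α - 1)) ^ (1/(2*(α / (2*α - 1) - 1)))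

open Real Set

noncomputable def tilde (x : ℝ) : ℝ := x / (2 * x - 1)

theorem tilde_lt_one {x : ℝ} (hx : 1 < x) : tilde x < 1 := by
  rw [tilde, div_lt_one (by linarith)]
  linarith

theorem le_tilde_comm {a b : ℝ} (ha : 1 / 2 < a) (hb : 1 / 2 < b) :
    a ≤ tilde b ↔ b ≤ tilde a := by
  rw [tilde, tilde, le_div_iff₀ (by linarith), le_div_iff₀ (by linarith)]
  constructor <;> intro h <;> linarith

/-- `log α / (2(α-1)) + log α̃ / (2(α̃-1))`, the logarithm of `B(α) / π`, after eliminating `α̃`. -/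
noncomputable def bExponent (x : ℝ) : ℝ :=
  -log x + (2 * x - 1) * log (2 * x - 1) / (2 * (x - 1))

theorem Bext_eq_pi_mul_exp {a : ℝ} (ha : 1 / 2 < a) (ha1 : a ≠ 1) :
    Bext a = π * exp (bExponent a) := by
  have ha0 : 0 < a := by linarith
  have h2a : 0 < 2 * a - 1 := by linarith
  have hsub : a / (2 * a - 1) - 1 = (1 - a) / (2 * a - 1) := by
    rw [div_sub_one h2a.ne']; ring
  have h1 : a - 1 ≠ 0 := sub_ne_zero.2 ha1
  have h1' : 1 - a ≠ 0 := sub_ne_zero.2 ha1.symm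
  rw [Bext, if_neg (by linarith), if_neg ha1, rpow_def_of_pos ha0,
    rpow_def_of_pos (by positivity), mul_assoc, ← exp_add, log_div ha0.ne' h2a.ne', hsub,
    bExponent]
  congr 2
  field_simp
  ring

theorem bExponent_tilde {x : ℝ} (hx0 : x ≠ 0) (hx : 2 * x - 1 ≠ 0) :
    bExponent (tilde x) = bExponent x := by
  rcases eq_or_ne x 1 with rfl | hx1
  · norm_num [tilde]
  have h2 : 2 * tilde x - 1 = (2 * x - 1)⁻¹ := by rw [tilde]; field_simp; ring
  have hsub : tilde x - 1 = (1 - x) / (2 * x - 1) := by rw [tilde, div_sub_one hx]; ring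
  have h1 : x - 1 ≠ 0 := sub_ne_zero.2 hx1
  have h1' : 1 - x ≠ 0 := sub_ne_zero.2 hx1.symm
  rw [bExponent, bExponent, h2, hsub, log_inv, tilde, log_div hx0 hx]
  field_simp
  ring

theorem hasDerivAt_bExponent {y : ℝ} (hy : 1 < y) :
    HasDerivAt bExponent ((2 * (y - 1) - y * log (2 * y - 1)) / (2 * y * (y - 1) ^ 2)) y := by
  have hlin : HasDerivAt (fun z : ℝ => 2 * z - 1) 2 y := by
    simpa using ((hasDerivAt_id y).const_mul 2).sub_const 1
  have hden : HasDerivAt (fun z : ℝ => 2 * (z - 1)) 2 y := by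
    simpa using ((hasDerivAt_id y).sub_const 1).const_mul 2
  have h := ((hasDerivAt_log (by linarith)).neg).add
    ((hlin.mul (hlin.log (by linarith))).div hden (by linarith))
  refine h.congr_deriv ?_
  have hy0 : y ≠ 0 := by linarith
  have hy1 : y - 1 ≠ 0 := by linarith
  simp only [Pi.mul_apply]
  rw [mul_div_cancel₀ _ (by linarith)]
  field_simp
  ring

theorem bExponent_antitoneOn : AntitoneOn bExponent (Ioi 1) := by
  refine antitoneOn_of_hasDerivWithinAt_nonpos (convex_Ioi 1)
    (f' := fun y => (2 * (y - 1) - y * log (2 * y - 1)) / (2 * y * (y - 1) ^ 2))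
    (fun y hy => (hasDerivAt_bExponent hy).continuousAt.continuousWithinAt)
    (fun y hy => ?_) (fun y hy => ?_) <;> rw [interior_Ioi] at hy
  · exact (hasDerivAt_bExponent hy).hasDerivWithinAt
  have hy1 : (1 : ℝ) < y := hy
  have hlog : 2 * (2 * y - 2) / (2 * y - 2 + 2) ≤ log (1 + (2 * y - 2)) :=
    le_log_one_add_of_nonneg (by linarith)
  rw [div_le_iff₀ (by linarith), show 1 + (2 * y - 2) = 2 * y - 1 by ring] at hlog
  exact div_nonpos_of_nonpos_of_nonneg (by linarith) (by positivity)

theorem log_two_lt_bExponent {x : ℝ} (hx : 1 < x) : log 2 < bExponent x := by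
  have hslope := strictConcaveOn_log_Ioi.secant_strict_mono (a := 1) (x := 2 * x - 1)
    (y := 2 * x) (mem_Ioi.2 one_pos) (mem_Ioi.2 (by linarith)) (mem_Ioi.2 (by linarith))
    (by linarith) (by linarith) (by linarith)
  rw [log_one, sub_zero, sub_zero, div_lt_div_iff₀ (by linarith) (by linarith)] at hslope
  have key : log (2 * x) < (2 * x - 1) * log (2 * x - 1) / (2 * (x - 1)) := by
    rw [lt_div_iff₀ (by linarith)]
    linarith
  rw [log_mul two_ne_zero (by linarith)] at key
  rw [bExponent]
  linarith

theorem Bext_le_of_le_tilde_general (α β : ℝ) (hα : 1 < α)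
    (hβ : β ≤ α / (2*α - 1)) :
    Bext β ≤ Bext α := by
  rw [Bext_eq_pi_mul_exp (by linarith) hα.ne']
  rcases le_or_gt β (1 / 2) with hβ2 | hβ2
  · rw [Bext, if_pos hβ2, mul_comm]
    gcongr
    exact ((log_lt_iff_lt_exp two_pos).1 (log_two_lt_bExponent hα)).le
  · have hβ1 : β < 1 := hβ.trans_lt (tilde_lt_one hα)
    have hαβ : α ≤ tilde β := (le_tilde_comm (by linarith) hβ2).2 hβ
    rw [Bext_eq_pi_mul_exp hβ2 hβ1.ne, ← bExponent_tilde (by linarith) (by linarith)]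
    gcongr
    exact bExponent_antitoneOn hα (hα.trans_le hαβ) hαβ

/-- For `α > 1` and `0 < β ≤ α̃ = α/(2α-1)`, one has `B(β) ≤ B(α)`. -/
theorem Bext_le_of_le_tilde (α β : ℝ) (hα : 1 < α) (hβ0 : 0 < β)
    (hβ : β ≤ α / (2*α - 1)) :
    Bext β ≤ Bext α :=
  Bext_le_of_le_tilde_general α β hα hβ
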